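/- Let θ be a nonempty shifted skew diagram and suppose some row or some column of θ contains exactly a boxes, where a ≥ 1. Then B(θ,p) = 0 for every integer p < a. -/

import Mathlib

/-- `hcoef a b = Σ_{j=0}^{min(a,b)} (-1)^j 2^{a-j} binom(a,j)`; it is `0` when `b < 0`. -/
def hcoef (a : ℕ) (b : ℤ) : ℤ :=
  ∑ j ∈ Finset.range (a + 1),
    if (j : ℤ) ≤ b then (-1) ^ j * 2 ^ (a - j) * (a.choose j) else 0

attribute [local instance] Classical.propDecidable

/-- The south-east corners of a finite set of boxes: boxes `(i,j)` such that
neither `(i+1,j)` nor `(i,j+1)` belongs to the set. -/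
def seCorners (θ : Finset (ℤ × ℤ)) : Finset (ℤ × ℤ) :=
  θ.filter fun b => (b.1 + 1, b.2) ∉ θ ∧ (b.1, b.2 + 1) ∉ θ

/-- The south-east rim of `θ`: boxes `(i,j) ∈ θ` such that no box `(i',j') ∈ θ`
has `i' > i` and `j' > j`. -/
def seRim (θ : Finset (ℤ × ℤ)) : Finset (ℤ × ℤ) :=
  θ.filter fun b => ∀ b' ∈ θ, ¬ (b.1 < b'.1 ∧ b.2 < b'.2)

/-- `d(θ)`: the number of boxes in the south-east rim of `θ`. -/
def dRim (θ : Finset (ℤ × ℤ)) : ℕ := (seRim θ).card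

/-- `θ` is a rim if it equals its own south-east rim. -/
def IsRim (θ : Finset (ℤ × ℤ)) : Prop := θ = seRim θ

/-- Two boxes are adjacent (connected) if they share a side. -/
def Adjacent (b b' : ℤ × ℤ) : Prop := |b.1 - b'.1| + |b.2 - b'.2| = 1

/-- `b'` can be reached from `b` by a chain of adjacent boxes of `θ`. -/
def Reach (θ : Finset (ℤ × ℤ)) (b b' : ℤ × ℤ) : Prop :=
  Relation.ReflTransGen (fun x y => y ∈ θ ∧ Adjacent x y) b b'

/-- The connected components of `θ`. -/
noncomputable def comps (θ : Finset (ℤ × ℤ)) : Finset (Finset (ℤ × ℤ)) :=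
  θ.image fun b => θ.filter fun b' => Reach θ b b'

/-- `N(θ)`: the number of connected components of `θ`. -/
noncomputable def Ncomp (θ : Finset (ℤ × ℤ)) : ℕ := (comps θ).card

/-- `N⁻(θ) = max(N(θ) - 1, 0)`. -/
noncomputable def Nminus (θ : Finset (ℤ × ℤ)) : ℕ := Ncomp θ - 1

/-- `N'(θ)`: the number of connected components of `θ` containing no diagonal box. -/
noncomputable def Nprime (θ : Finset (ℤ × ℤ)) : ℕ :=
  ((comps θ).filter fun c => ∀ b ∈ c, b.1 ≠ b.2).card

/-- `B(θ,p) = Σ_S (-1)^{|S|} h(N⁻(θ∖S), d(θ∖S) - p)`, the sum over subsets `S`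
of the set of south-east corners of `θ`. -/
noncomputable def Bcoef (θ : Finset (ℤ × ℤ)) (p : ℤ) : ℤ :=
  ∑ S ∈ (seCorners θ).powerset,
    (-1) ^ S.card * hcoef (Nminus (θ \ S)) ((dRim (θ \ S) : ℤ) - p)

/-- `C(θ,p) = Σ_S (-1)^{|S|} h(N'(θ∖S), d(θ∖S) - p)`, the sum over subsets `S`
of the set of south-east corners of `θ`. -/
noncomputable def Ccoef (θ : Finset (ℤ × ℤ)) (p : ℤ) : ℤ :=
  ∑ S ∈ (seCorners θ).powerset,
    (-1) ^ S.card * hcoef (Nprime (θ \ S)) ((dRim (θ \ S) : ℤ) - p)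

/-- A strict partition with largest part at most `n`, encoded as a function
with `lam i = 0` for `i` beyond the length. -/
def IsStrictPartition (n : ℕ) (lam : ℤ → ℤ) : Prop :=
  lam 1 ≤ (n : ℤ) ∧ (∀ i : ℤ, 1 ≤ i → 0 ≤ lam i) ∧
  (∀ i : ℤ, 1 ≤ i → lam (i + 1) = 0 ∨ lam (i + 1) < lam i)

/-- The shifted Young diagram `{(i,j) : 1 ≤ i ≤ ℓ, i ≤ j ≤ λ_i + i - 1}` of a
strict partition. -/
noncomputable def shiftedD (n : ℕ) (lam : ℤ → ℤ) : Finset (ℤ × ℤ) :=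
  (Finset.Icc (1 : ℤ) (n : ℤ) ×ˢ Finset.Icc (1 : ℤ) (2 * (n : ℤ))).filter
    fun b => b.1 ≤ b.2 ∧ b.2 ≤ lam b.1 + b.1 - 1

/-- `θ` is a shifted skew diagram: `θ = ν/λ` for strict partitions `λ ⊆ ν`
with `ν_1 ≤ n`. -/
def IsShiftedSkewDiagram (n : ℕ) (θ : Finset (ℤ × ℤ)) : Prop :=
  ∃ lam nu : ℤ → ℤ, IsStrictPartition n lam ∧ IsStrictPartition n nu ∧
    (∀ i : ℤ, 1 ≤ i → lam i ≤ nu i) ∧ θ = shiftedD n nu \ shiftedD n lam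

/-!
For `T = θ ∖ S` the weight `h(N⁻(T), d(T) - p)` is `(2 - 1) ^ N⁻(T) = 1` as soon as
`N⁻(T) + p ≤ d(T)`, and then `B(θ,p) = Σ_S (-1)^|S| = 0` since `θ` has a south-east corner.
Removing corners keeps the shape closed enough that in `T` boxes of equal content `j - i` are
connected and the rim carries exactly one box of each content. So `d(T)` counts contents,
component by component, and every component carries at least one. The given row (or column)
minus its last box stays in `T`, is connected, and carries `a - 1` contents, whence
`d(T) ≥ (a - 1) + N⁻(T)`.
-/

lemma hcoef_eq_one {m : ℕ} {b : ℤ} (h : (m : ℤ) ≤ b) : hcoef m b = 1 := by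
  have : hcoef m b = ∑ j ∈ Finset.range (m + 1), (-1 : ℤ) ^ j * 2 ^ (m - j) * m.choose j :=
    Finset.sum_congr rfl fun j hj => if_pos (by have := Finset.mem_range.mp hj; omega)
  -- the binomial expansion of `(-1 + 2) ^ m`
  rw [this, ← add_pow]
  norm_num

/-- The closure properties of shifted skew diagrams on which the argument rests. -/
structure IsSkewShape (θ : Finset (ℤ × ℤ)) : Prop where
  right_mem : ∀ {b b' : ℤ × ℤ}, b ∈ θ → b' ∈ θ → b.1 < b'.1 → b.2 < b'.2 → (b.1, b.2 + 1) ∈ θ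
  diag_mem : ∀ {b b' : ℤ × ℤ}, b ∈ θ → b' ∈ θ → b.1 < b'.1 → b.2 < b'.2 →
    (b.1 + 1, b.2 + 1) ∈ θ
  row_convex : ∀ {i j j' j'' : ℤ}, (i, j) ∈ θ → (i, j'') ∈ θ → j ≤ j' → j' ≤ j'' → (i, j') ∈ θ
  col_convex : ∀ {i i' i'' j : ℤ}, (i, j) ∈ θ → (i'', j) ∈ θ → i ≤ i' → i' ≤ i'' → (i', j) ∈ θ

section ShiftedSkewDiagram

variable {n : ℕ} {lam nu : ℤ → ℤ}

lemma IsStrictPartition.add_sub_le (h : IsStrictPartition n lam) {i i' : ℤ} (hi : 1 ≤ i)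
    (hii' : i ≤ i') (hpos : 1 ≤ lam i') : lam i' + (i' - i) ≤ lam i := by
  induction i', hii' using Int.leInduction with
  | base => simp
  | succ k hik ih =>
    rcases h.2.2 k (by omega) with h0 | hlt
    · omega
    · linarith [ih (by omega)]

lemma mem_shiftedD_sdiff {b : ℤ × ℤ} :
    b ∈ shiftedD n nu \ shiftedD n lam ↔ 1 ≤ b.1 ∧ b.1 ≤ n ∧ 1 ≤ b.2 ∧ b.2 ≤ 2 * n ∧
      b.1 ≤ b.2 ∧ b.2 ≤ nu b.1 + b.1 - 1 ∧ lam b.1 + b.1 ≤ b.2 := by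
  simp only [Finset.mem_sdiff, shiftedD, Finset.mem_filter, Finset.mem_product, Finset.mem_Icc]
  omega

lemma IsShiftedSkewDiagram.isSkewShape {θ : Finset (ℤ × ℤ)} (h : IsShiftedSkewDiagram n θ) :
    IsSkewShape θ := by
  obtain ⟨lam, nu, hlam, hnu, -, rfl⟩ := h
  refine ⟨fun hb hb' h1 h2 => ?_, fun hb hb' h1 h2 => ?_, fun hb hb' hj hj' => ?_,
    @fun _ i' _ _ hb hb' hi hi' => ?_⟩
  all_goals
    rw [mem_shiftedD_sdiff] at hb hb' ⊢
    dsimp only at hb hb' ⊢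
  · have := hnu.add_sub_le hb.1 h1.le (by omega)
    omega
  · have := hnu.add_sub_le (i := _ + 1) (by omega) h1 (by omega)
    rcases hlam.2.2 _ hb.1 with h0 | hlt <;> omega
  · omega
  · have := hnu.add_sub_le (by omega) hi' (by omega)
    rcases le_or_gt (lam i') 0 with h0 | hpos
    · omega
    · have := hlam.add_sub_le hb.1 hi hpos
      omega

end ShiftedSkewDiagram

section Reach

variable {T : Finset (ℤ × ℤ)} {x y z : ℤ × ℤ}

lemma Adjacent.symm (h : Adjacent x y) : Adjacent y x := by
  rwa [Adjacent, abs_sub_comm y.1, abs_sub_comm y.2]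

lemma Reach.mem (hz : z ∈ T) (h : Reach T z x) : x ∈ T := by
  induction h with
  | refl => exact hz
  | tail _ hyx _ => exact hyx.1

lemma Reach.symm (hz : z ∈ T) (h : Reach T z x) : Reach T x z := by
  induction h with
  | refl => exact .refl
  | tail hzy hyx ih => exact .head ⟨Reach.mem hz hzy, hyx.2.symm⟩ ih

lemma reach_line (L : ℤ → ℤ × ℤ) (hadj : ∀ k, Adjacent (L k) (L (k + 1))) {k k' : ℤ}
    (hkk' : k ≤ k') (hmem : ∀ l, k < l → l ≤ k' → L l ∈ T) : Reach T (L k) (L k') := by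
  induction k', hkk' using Int.leInduction with
  | base => exact .refl
  | succ l hkl ih =>
    exact .tail (ih fun m hm hml => hmem m hm (by omega)) ⟨hmem _ (by omega) le_rfl, hadj l⟩

lemma filter_reach_eq (hz : z ∈ T) (h : Reach T z x) :
    T.filter (Reach T z ·) = T.filter (Reach T x ·) := by
  ext w
  simp only [Finset.mem_filter]
  exact and_congr_right fun _ => ⟨(h.symm hz).trans, h.trans⟩

lemma self_mem_filter_reach (hz : z ∈ T) : z ∈ T.filter (Reach T z ·) :=
  Finset.mem_filter.mpr ⟨hz, .refl⟩

lemma subset_of_mem_comps {c : Finset (ℤ × ℤ)} (hc : c ∈ comps T) : c ⊆ T := by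
  obtain ⟨b, -, rfl⟩ := Finset.mem_image.mp hc
  exact Finset.filter_subset _ _

lemma nonempty_of_mem_comps {c : Finset (ℤ × ℤ)} (hc : c ∈ comps T) : c.Nonempty := by
  obtain ⟨b, hb, rfl⟩ := Finset.mem_image.mp hc
  exact ⟨b, self_mem_filter_reach hb⟩

lemma eq_of_mem_comps_of_reach {c c' : Finset (ℤ × ℤ)} (hc : c ∈ comps T) (hc' : c' ∈ comps T)
    (hz : z ∈ c) (hx : x ∈ c') (h : Reach T z x) : c = c' := by
  obtain ⟨b, hb, rfl⟩ := Finset.mem_image.mp hc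
  obtain ⟨b', hb', rfl⟩ := Finset.mem_image.mp hc'
  obtain ⟨hzT, hbz⟩ := Finset.mem_filter.mp hz
  obtain ⟨-, hb'x⟩ := Finset.mem_filter.mp hx
  rw [filter_reach_eq hb hbz, filter_reach_eq hzT h, ← filter_reach_eq hb' hb'x]

lemma biUnion_comps (T : Finset (ℤ × ℤ)) : (comps T).biUnion id = T := by
  refine subset_antisymm (Finset.biUnion_subset.mpr fun c hc => subset_of_mem_comps hc)
    fun b hb => Finset.mem_biUnion.mpr ⟨_, Finset.mem_image_of_mem _ hb, self_mem_filter_reach hb⟩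

end Reach

def content (b : ℤ × ℤ) : ℤ := b.2 - b.1

lemma injOn_content_seRim (T : Finset (ℤ × ℤ)) : Set.InjOn content (seRim T) := by
  intro z hz x hx hc
  simp only [seRim, Finset.mem_coe, Finset.mem_filter, content] at hz hx hc
  rcases lt_trichotomy z.1 x.1 with h | h | h
  · exact absurd ⟨h, by omega⟩ (hz.2 x hx.1)
  · exact Prod.ext h (by omega)
  · exact absurd ⟨h, by omega⟩ (hx.2 z hz.1)

lemma add_card_sub_one_le_sum {ι : Type*} {s : Finset ι} {f : ι → ℕ} (hf : ∀ i ∈ s, 1 ≤ f i)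
    {i : ι} (hi : i ∈ s) : f i + (s.card - 1) ≤ ∑ j ∈ s, f j := by
  rw [← Finset.add_sum_erase s f hi, ← Finset.card_erase_of_mem hi]
  gcongr
  simpa using Finset.card_nsmul_le_sum (s.erase i) f 1 fun j hj => hf j (Finset.mem_of_mem_erase hj)

namespace IsSkewShape

variable {θ S : Finset (ℤ × ℤ)}

lemma eq_of_mem_seCorners_of_le (hθ : IsSkewShape θ) {c b : ℤ × ℤ} (hc : c ∈ seCorners θ)
    (hb : b ∈ θ) (hcb : c ≤ b) : b = c := by
  obtain ⟨i, j⟩ := c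
  obtain ⟨k, l⟩ := b
  obtain ⟨hcθ, hdown, hright⟩ := Finset.mem_filter.mp hc
  obtain ⟨hik, hjl⟩ := Prod.mk_le_mk.mp hcb
  rcases hik.eq_or_lt with rfl | hik
  · rcases hjl.eq_or_lt with rfl | hjl
    · rfl
    · exact absurd (hθ.row_convex hcθ hb (by omega) hjl) hright
  · rcases hjl.eq_or_lt with rfl | hjl
    · exact absurd (hθ.col_convex hcθ hb (by omega) hik) hdown
    · exact absurd (hθ.right_mem hcθ hb hik hjl) hright

lemma mem_sdiff_of_le (hθ : IsSkewShape θ) (hS : S ⊆ seCorners θ) {w x : ℤ × ℤ} (hw : w ∈ θ)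
    (hx : x ∈ θ \ S) (hwx : w ≤ x) : w ∈ θ \ S := by
  obtain ⟨hxθ, hxS⟩ := Finset.mem_sdiff.mp hx
  refine Finset.mem_sdiff.mpr ⟨hw, fun hwS => hxS ?_⟩
  rwa [hθ.eq_of_mem_seCorners_of_le (hS hwS) hxθ hwx]

lemma mem_seRim_of_forall_content_eq (hθ : IsSkewShape θ) (hS : S ⊆ seCorners θ)
    {z : ℤ × ℤ} (hz : z ∈ θ \ S) (hmax : ∀ w ∈ θ \ S, content w = content z → w.1 ≤ z.1) :
    z ∈ seRim (θ \ S) := by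
  refine Finset.mem_filter.mpr ⟨hz, fun b hb ⟨h1, h2⟩ => ?_⟩
  have hw := hθ.diag_mem (Finset.mem_sdiff.mp hz).1 (Finset.mem_sdiff.mp hb).1 h1 h2
  have := hmax _ (hθ.mem_sdiff_of_le hS hw hb (Prod.mk_le_mk.mpr ⟨h1, h2⟩))
    (by simp only [content]; ring)
  omega

lemma reach_of_content_eq_of_fst_eq_add (hθ : IsSkewShape θ) (hS : S ⊆ seCorners θ)
    {x : ℤ × ℤ} (hx : x ∈ θ \ S) :
    ∀ (k : ℕ) {z : ℤ × ℤ}, z ∈ θ \ S → content x = content z → x.1 = z.1 + k →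
      Reach (θ \ S) z x
  | 0, z, _, hc, hk => by
    simp only [content] at hc
    rw [show x = z from Prod.ext (by omega) (by omega)]
    exact .refl
  | k + 1, z, hz, hc, hk => by
    simp only [content] at hc
    have hzθ := (Finset.mem_sdiff.mp hz).1
    have hxθ := (Finset.mem_sdiff.mp hx).1
    have hlt1 : z.1 < x.1 := by omega
    have hlt2 : z.2 < x.2 := by omega
    have hright := hθ.mem_sdiff_of_le hS (hθ.right_mem hzθ hxθ hlt1 hlt2) hx
      (Prod.mk_le_mk.mpr ⟨hlt1.le, hlt2⟩)
    have hdiag := hθ.mem_sdiff_of_le hS (hθ.diag_mem hzθ hxθ hlt1 hlt2) hx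
      (Prod.mk_le_mk.mpr ⟨hlt1, hlt2⟩)
    refine .head ⟨hright, by simp [Adjacent]⟩ (.head ⟨hdiag, by simp [Adjacent]⟩ ?_)
    exact reach_of_content_eq_of_fst_eq_add hθ hS hx k hdiag
      (by simp only [content]; omega) (by push_cast at hk ⊢; omega)

lemma reach_of_content_eq (hθ : IsSkewShape θ) (hS : S ⊆ seCorners θ) {z x : ℤ × ℤ}
    (hz : z ∈ θ \ S) (hx : x ∈ θ \ S) (hc : content x = content z) : Reach (θ \ S) z x := by
  rcases le_total z.1 x.1 with h | h
  · exact hθ.reach_of_content_eq_of_fst_eq_add hS hx (x.1 - z.1).toNat hz hc (by omega)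
  · exact (hθ.reach_of_content_eq_of_fst_eq_add hS hz (z.1 - x.1).toNat hx hc.symm
      (by omega)).symm hx

lemma image_content_seRim (hθ : IsSkewShape θ) (hS : S ⊆ seCorners θ) :
    (seRim (θ \ S)).image content = (θ \ S).image content := by
  refine subset_antisymm (Finset.image_subset_image (Finset.filter_subset _ _)) fun t ht => ?_
  obtain ⟨b, hb, rfl⟩ := Finset.mem_image.mp ht
  obtain ⟨z, hz, hzmax⟩ := ((θ \ S).filter (content · = content b)).exists_max_image Prod.fst
    ⟨b, Finset.mem_filter.mpr ⟨hb, rfl⟩⟩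
  obtain ⟨hzT, hzc⟩ := Finset.mem_filter.mp hz
  refine Finset.mem_image.mpr ⟨z, hθ.mem_seRim_of_forall_content_eq hS hzT fun w hw hwc => ?_, hzc⟩
  exact hzmax w (Finset.mem_filter.mpr ⟨hw, hwc.trans hzc⟩)

lemma dRim_sdiff_eq_sum (hθ : IsSkewShape θ) (hS : S ⊆ seCorners θ) :
    dRim (θ \ S) = ∑ c ∈ comps (θ \ S), (c.image content).card := by
  rw [dRim, ← Finset.card_image_of_injOn (injOn_content_seRim _), hθ.image_content_seRim hS]
  conv_lhs => rw [← biUnion_comps (θ \ S), Finset.biUnion_image]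
  refine Finset.card_biUnion fun c hc c' hc' hne => Finset.disjoint_left.mpr fun t ht ht' => ?_
  obtain ⟨z, hz, rfl⟩ := Finset.mem_image.mp ht
  obtain ⟨x, hx, hxz⟩ := Finset.mem_image.mp ht'
  exact hne (eq_of_mem_comps_of_reach hc hc' hz hx (hθ.reach_of_content_eq hS
    (subset_of_mem_comps hc hz) (subset_of_mem_comps hc' hx) hxz))

lemma card_image_content_add_Nminus_le (hθ : IsSkewShape θ) (hS : S ⊆ seCorners θ)
    {E : Finset (ℤ × ℤ)} (hE : E ⊆ θ \ S) (hconn : ∀ e ∈ E, ∀ e' ∈ E, Reach (θ \ S) e e') :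
    (E.image content).card + Nminus (θ \ S) ≤ dRim (θ \ S) := by
  have hpos : ∀ c ∈ comps (θ \ S), 1 ≤ (c.image content).card := fun c hc =>
    ((nonempty_of_mem_comps hc).image _).card_pos
  rw [hθ.dRim_sdiff_eq_sum hS, Nminus, Ncomp]
  rcases E.eq_empty_or_nonempty with rfl | ⟨e, he⟩
  · simpa using (Nat.sub_le _ _).trans (Finset.card_nsmul_le_sum _ _ 1 hpos)
  · have hc : (θ \ S).filter (Reach (θ \ S) e ·) ∈ comps (θ \ S) :=
      Finset.mem_image_of_mem _ (hE he)
    refine le_trans ?_ (add_card_sub_one_le_sum hpos hc)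
    gcongr
    exact fun e' he' => Finset.mem_filter.mpr ⟨hE he', hconn e he e' he'⟩

/-- `L` parametrises a row `k ↦ (i, k)` or a column `k ↦ (k, j)`. The boxes `L k` of `θ` followed
by `L (k + 1) ∈ θ` are not corners, so they survive in `θ \ S`, where they form a connected
segment with distinct contents. -/
lemma card_filter_mem_range_sub_one_add_Nminus_le (hθ : IsSkewShape θ) (hS : S ⊆ seCorners θ)
    (L : ℤ → ℤ × ℤ) (hadj : ∀ k, Adjacent (L k) (L (k + 1)))
    (hinj : Function.Injective (content ∘ L))
    (hconv : ∀ {k k' k'' : ℤ}, L k ∈ θ → L k'' ∈ θ → k ≤ k' → k' ≤ k'' → L k' ∈ θ)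
    (hnext : ∀ k, L (k + 1) ∈ θ → L k ∉ seCorners θ) :
    (θ.filter (· ∈ Set.range L)).card - 1 + Nminus (θ \ S) ≤ dRim (θ \ S) := by
  set K := θ.preimage L hinj.of_comp.injOn
  set K' := K.filter (· + 1 ∈ K)
  have hK'T : ∀ k ∈ K', L k ∈ θ \ S := fun k hk => by
    obtain ⟨hk, hk1⟩ := Finset.mem_filter.mp hk
    rw [Finset.mem_preimage] at hk hk1
    exact Finset.mem_sdiff.mpr ⟨hk, fun hkS => hnext k hk1 (hS hkS)⟩
  have hK'conv : ∀ {k k'}, k ∈ K' → k' ∈ K' → ∀ l, k ≤ l → l ≤ k' → l ∈ K' := by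
    intro k k' hk hk' l hkl hlk'
    simp only [K', K, Finset.mem_filter, Finset.mem_preimage] at hk hk' ⊢
    exact ⟨hconv hk.1 hk'.1 hkl hlk', hconv hk.1 hk'.2 (by omega) (by omega)⟩
  have hcard : K.card - 1 ≤ K'.card := by
    have hlast : (K.filter (· + 1 ∉ K)).card ≤ 1 := by
      refine Finset.card_le_one.mpr fun k hk k' hk' => ?_
      simp only [K, Finset.mem_filter, Finset.mem_preimage] at hk hk'
      by_contra hne
      rcases lt_or_gt_of_ne hne with h | h
      · exact hk.2 (hconv hk.1 hk'.1 (by omega) h)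
      · exact hk'.2 (hconv hk'.1 hk.1 (by omega) h)
    have : K'.card + (K.filter (· + 1 ∉ K)).card = K.card :=
      Finset.card_filter_add_card_filter_not _
    omega
  have hconn : ∀ e ∈ K'.image L, ∀ e' ∈ K'.image L, Reach (θ \ S) e e' := by
    have hreach : ∀ {k k'}, k ∈ K' → k' ∈ K' → k ≤ k' → Reach (θ \ S) (L k) (L k') :=
      fun hk hk' hkk' => reach_line L hadj hkk' fun l hkl hlk' =>
        hK'T l (hK'conv hk hk' l hkl.le hlk')
    simp only [Finset.mem_image]
    rintro _ ⟨k, hk, rfl⟩ _ ⟨k', hk', rfl⟩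
    rcases le_total k k' with h | h
    · exact hreach hk hk' h
    · exact (hreach hk' hk h).symm (hK'T k' hk')
  have key := hθ.card_image_content_add_Nminus_le hS
    (fun e he => by obtain ⟨k, hk, rfl⟩ := Finset.mem_image.mp he; exact hK'T k hk) hconn
  rw [Finset.image_image, Finset.card_image_of_injective _ hinj] at key
  have hKcard : K.card = (θ.filter (· ∈ Set.range L)).card := Finset.card_preimage _ _ _
  omega

lemma card_row_sub_one_add_Nminus_le (hθ : IsSkewShape θ) (hS : S ⊆ seCorners θ) (i : ℤ) :
    (θ.filter fun b => b.1 = i).card - 1 + Nminus (θ \ S) ≤ dRim (θ \ S) := by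
  have key := hθ.card_filter_mem_range_sub_one_add_Nminus_le hS (fun k => (i, k))
    (fun k => by simp [Adjacent]) (fun k k' h => by simpa [content] using h)
    hθ.row_convex (fun k hk hc => (Finset.mem_filter.mp hc).2.2 hk)
  convert key using 5
  exact ⟨fun h => ⟨_, Prod.ext h.symm rfl⟩, by rintro ⟨k, rfl⟩; rfl⟩

lemma card_col_sub_one_add_Nminus_le (hθ : IsSkewShape θ) (hS : S ⊆ seCorners θ) (j : ℤ) :
    (θ.filter fun b => b.2 = j).card - 1 + Nminus (θ \ S) ≤ dRim (θ \ S) := by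
  have key := hθ.card_filter_mem_range_sub_one_add_Nminus_le hS (fun k => (k, j))
    (fun k => by simp [Adjacent]) (fun k k' h => by simpa [content] using h)
    hθ.col_convex (fun k hk hc => (Finset.mem_filter.mp hc).2.1 hk)
  convert key using 5
  exact ⟨fun h => ⟨_, Prod.ext rfl h.symm⟩, by rintro ⟨k, rfl⟩; rfl⟩

end IsSkewShape

lemma seCorners_nonempty {θ : Finset (ℤ × ℤ)} (hne : θ.Nonempty) : (seCorners θ).Nonempty := by
  obtain ⟨b, hb, hmax⟩ := θ.exists_max_image (fun b => b.1 + b.2) hne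
  refine ⟨b, Finset.mem_filter.mpr ⟨hb, fun h => ?_, fun h => ?_⟩⟩ <;>
  · have := hmax _ h
    dsimp only at this
    omega

theorem Bcoef_eq_zero_of_short_general (n : ℕ) (θ : Finset (ℤ × ℤ))
    (hθ : IsShiftedSkewDiagram n θ) (hne : θ.Nonempty) (a : ℕ)
    (hrowcol : (∃ i : ℤ, (θ.filter fun b => b.1 = i).card = a) ∨
               (∃ j : ℤ, (θ.filter fun b => b.2 = j).card = a))
    (p : ℤ) (hp : p < (a : ℤ)) : Bcoef θ p = 0 := by
  have hterm : ∀ S ∈ (seCorners θ).powerset,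
      (-1) ^ S.card * hcoef (Nminus (θ \ S)) (dRim (θ \ S) - p) = (-1 : ℤ) ^ S.card := by
    intro S hS
    have hS := Finset.mem_powerset.mp hS
    have hbound : a - 1 + Nminus (θ \ S) ≤ dRim (θ \ S) := by
      rcases hrowcol with ⟨i, rfl⟩ | ⟨j, rfl⟩
      · exact hθ.isSkewShape.card_row_sub_one_add_Nminus_le hS i
      · exact hθ.isSkewShape.card_col_sub_one_add_Nminus_le hS j
    rw [hcoef_eq_one (by omega), mul_one]
  rw [Bcoef, Finset.sum_congr rfl hterm, Finset.sum_powerset_neg_one_pow_card,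
    if_neg (seCorners_nonempty hne).ne_empty]

/-- If a nonempty shifted skew diagram `θ` has some row or some column with
exactly `a` boxes (`a ≥ 1`), then `B(θ,p) = 0` for every integer `p < a`. -/
theorem Bcoef_eq_zero_of_short (n : ℕ) (hn : 0 < n) (θ : Finset (ℤ × ℤ))
    (hθ : IsShiftedSkewDiagram n θ) (hne : θ.Nonempty) (a : ℕ) (ha : 1 ≤ a)
    (hrowcol : (∃ i : ℤ, (θ.filter fun b => b.1 = i).card = a) ∨
               (∃ j : ℤ, (θ.filter fun b => b.2 = j).card = a))
    (p : ℤ) (hp : p < (a : ℤ)) : Bcoef θ p = 0 :=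
  Bcoef_eq_zero_of_short_general n θ hθ hne a hrowcol p hp
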